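/- Let ξ = (ξ_1,...,ξ_d) ∼ Multinomial(N,p) with p ∈ S_d, and let m ∈ ℕ. Then E[Π_{i=1}^d (ξ_i − Np_i)^{2m}] = Σ_{k_1,...,k_d=0}^{2m} Σ_{j_1=0}^{k_1} ⋯ Σ_{j_d=0}^{k_d} N^(j_1+⋯+j_d) · Π_{i=1}^d [ C(2m,k_i) · S(k_i,j_i) · (−N)^{2m−k_i} · p_i^{2m−k_i+j_i} ]. -/

import Mathlib

/-- Falling factorial: `fallFac x j = x (x-1) ⋯ (x-j+1)`, with `fallFac x 0 = 1`. -/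
def fallFac (x : ℝ) : ℕ → ℝ
  | 0 => 1
  | n + 1 => fallFac x n * (x - n)

/-- Stirling numbers of the second kind. -/
def stirling2 : ℕ → ℕ → ℕ
  | 0, 0 => 1
  | 0, _ + 1 => 0
  | _ + 1, 0 => 0
  | k + 1, j + 1 => (j + 1) * stirling2 k (j + 1) + stirling2 k j

/-- Probability mass function of the `Multinomial(N, p)` distribution. -/
noncomputable def multPMF (d N : ℕ) (p : Fin d → ℝ) (k : Fin d → ℕ) : ℝ :=
  if (∑ i, k i) ≤ N then
    (Nat.factorial N : ℝ) /
        ((Nat.factorial (N - ∑ i, k i) : ℝ) * ∏ i, (Nat.factorial (k i) : ℝ)) *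
      (1 - ∑ i, p i) ^ (N - ∑ i, k i) * ∏ i, p i ^ k i
  else 0

/-- Expectation of `f ξ` for `ξ ∼ Multinomial(N, p)`. -/
noncomputable def multExp (d N : ℕ) (p : Fin d → ℝ) (f : (Fin d → ℕ) → ℝ) : ℝ :=
  ∑ k ∈ Fintype.piFinset fun _ : Fin d => Finset.range (N + 1), multPMF d N p k * f k

/-! Expanding each `(ξ_i - N p_i)^{2m}` by the binomial theorem and each power `ξ_i^k` in falling
factorials through Stirling numbers of the second kind, linearity reduces the claim to the mixed
factorial moments `E[∏ ξ_i^{(j_i)}] = N^{(|j|)} ∏ p_i^{j_i}`. These come from the shift identity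
`P_N(l + j) ∏ (l_i + j_i)^{(j_i)} = N^{(|j|)} p^j P_{N - |j|}(l)` for the multinomial weights
together with their total mass `1`, which is the multinomial theorem applied to
`(∑ p_i + (1 - ∑ p_i))^N`. -/

open Finset Polynomial

theorem stirling2_eq_stirlingSecond : ∀ k j : ℕ, stirling2 k j = Nat.stirlingSecond k j
  | 0, 0 | 0, _ + 1 | _ + 1, 0 => rfl
  | k + 1, j + 1 => by
    rw [stirling2, Nat.stirlingSecond_succ_succ, stirling2_eq_stirlingSecond k (j + 1),
      stirling2_eq_stirlingSecond k j]

theorem fallFac_eq_descPochhammer_eval (x : ℝ) :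
    ∀ j : ℕ, fallFac x j = (descPochhammer ℝ j).eval x
  | 0 => by simp [fallFac]
  | j + 1 => by rw [fallFac, descPochhammer_succ_eval, fallFac_eq_descPochhammer_eval x j]

theorem fallFac_natCast (n j : ℕ) : fallFac (n : ℝ) j = n.descFactorial j := by
  rw [fallFac_eq_descPochhammer_eval, descPochhammer_eval_eq_descFactorial]

theorem X_mul_descPochhammer {R : Type*} [Ring R] (k : ℕ) :
    X * descPochhammer R k = descPochhammer R (k + 1) + (k : R[X]) * descPochhammer R k := by
  rw [descPochhammer_succ_right, (commute_X _).eq, mul_sub, Nat.cast_comm, sub_add_cancel]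

theorem X_pow_eq_sum_stirlingSecond_mul_descPochhammer {R : Type*} [CommRing R] (n : ℕ) :
    (X : R[X]) ^ n = ∑ k ∈ range (n + 1), (n.stirlingSecond k : R[X]) * descPochhammer R k := by
  induction n with
  | zero => simp
  | succ n ih =>
    have shift : ∑ k ∈ range (n + 1), (n.stirlingSecond k : R[X]) * (k * descPochhammer R k)
        = ∑ k ∈ range (n + 1),
            ((k + 1) * n.stirlingSecond (k + 1) : R[X]) * descPochhammer R (k + 1) := by
      rw [sum_range_succ', sum_range_succ, Nat.stirlingSecond_eq_zero_of_lt (Nat.lt_succ_self n)]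
      simp only [Nat.cast_zero, zero_mul, mul_zero, add_zero]
      refine sum_congr rfl fun k _ => ?_
      push_cast
      ring
    calc (X : R[X]) ^ (n + 1)
        = ∑ k ∈ range (n + 1), (n.stirlingSecond k : R[X]) * (X * descPochhammer R k) := by
          rw [pow_succ', ih, mul_sum]
          exact sum_congr rfl fun k _ => by ring
      _ = ∑ k ∈ range (n + 1), (n.stirlingSecond k : R[X]) * descPochhammer R (k + 1)
          + ∑ k ∈ range (n + 1), (n.stirlingSecond k : R[X]) * (k * descPochhammer R k) := by
          simp only [X_mul_descPochhammer, mul_add, sum_add_distrib]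
      _ = ∑ k ∈ range (n + 1),
            ((n + 1).stirlingSecond (k + 1) : R[X]) * descPochhammer R (k + 1) := by
          rw [shift, ← sum_add_distrib]
          refine sum_congr rfl fun k _ => ?_
          rw [Nat.stirlingSecond_succ_succ]
          push_cast
          ring
      _ = _ := by simp [sum_range_succ' _ (n + 1)]

theorem pow_eq_sum_stirling2_mul_fallFac (x : ℝ) (n : ℕ) :
    x ^ n = ∑ k ∈ range (n + 1), (stirling2 n k : ℝ) * fallFac x k := by
  simpa [eval_finsetSum, fallFac_eq_descPochhammer_eval, stirling2_eq_stirlingSecond] using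
    congrArg (eval x) (X_pow_eq_sum_stirlingSecond_mul_descPochhammer (R := ℝ) n)

theorem sub_pow_eq_sum_fallFac (x c : ℝ) (n : ℕ) :
    (x - c) ^ n = ∑ k ∈ range (n + 1), ∑ j ∈ range (k + 1),
      (n.choose k * stirling2 k j * (-c) ^ (n - k) : ℝ) * fallFac x j := by
  rw [sub_eq_add_neg, add_pow]
  refine sum_congr rfl fun k _ => ?_
  rw [pow_eq_sum_stirling2_mul_fallFac x k, sum_mul, sum_mul]
  exact sum_congr rfl fun j _ => by ring

theorem prod_sub_pow_eq_sum_prod_fallFac {ι : Type*} [Fintype ι] [DecidableEq ι]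
    (x c : ι → ℝ) (n : ℕ) :
    ∏ i, (x i - c i) ^ n =
      ∑ k ∈ Fintype.piFinset fun _ : ι => range (n + 1),
        ∑ j ∈ Fintype.piFinset fun i => range (k i + 1),
          (∏ i, (n.choose (k i) * stirling2 (k i) (j i) * (-c i) ^ (n - k i) : ℝ)) *
            ∏ i, fallFac (x i) (j i) := by
  simp_rw [sub_pow_eq_sum_fallFac, prod_univ_sum, ← prod_mul_distrib]

theorem le_of_prod_descFactorial_ne_zero {ι : Type*} [Fintype ι] {k j : ι → ℕ}
    (h : ∏ i, ((k i).descFactorial (j i) : ℝ) ≠ 0) : j ≤ k := fun i => by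
  have := prod_ne_zero_iff.1 h i (mem_univ i)
  rwa [Nat.cast_ne_zero, Ne, Nat.descFactorial_eq_zero_iff_lt, not_lt] at this

theorem mem_piFinset_range_of_sum_le {ι : Type*} [Fintype ι] [DecidableEq ι] {k : ι → ℕ} {N : ℕ}
    (h : ∑ i, k i ≤ N) : k ∈ Fintype.piFinset fun _ : ι => range (N + 1) :=
  Fintype.mem_piFinset.2 fun i =>
    mem_range.2 <| Nat.lt_succ_of_le <|
      (single_le_sum (fun _ _ => Nat.zero_le _) (mem_univ i)).trans h

section Multinomial

variable {d N : ℕ} {p : Fin d → ℝ}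

theorem multPMF_eq_zero_of_lt {k : Fin d → ℕ} (h : N < ∑ i, k i) : multPMF d N p k = 0 :=
  if_neg h.not_ge

theorem multExp_eq_sum_of_support (f : (Fin d → ℕ) → ℝ) (s : Finset (Fin d → ℕ))
    (hs : ∀ k, ∑ i, k i ≤ N → f k ≠ 0 → k ∈ s) :
    multExp d N p f = ∑ k ∈ s, multPMF d N p k * f k := by
  rw [multExp, ← sum_filter_ne_zero, ← sum_filter_ne_zero (s := s)]
  congr 1
  ext k
  simp only [mem_filter, and_congr_left_iff, ne_eq, mul_eq_zero, not_or]
  intro ⟨hpmf, hf⟩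
  have hk : ∑ i, k i ≤ N := not_lt.1 fun h => hpmf (multPMF_eq_zero_of_lt h)
  exact ⟨fun _ => hs k hk hf, fun _ => mem_piFinset_range_of_sum_le hk⟩

theorem multExp_sum {ι : Type*} (s : Finset ι) (f : ι → (Fin d → ℕ) → ℝ) :
    multExp d N p (fun ξ => ∑ a ∈ s, f a ξ) = ∑ a ∈ s, multExp d N p (f a) := by
  simp only [multExp, mul_sum]
  exact sum_comm

theorem multExp_const_mul (c : ℝ) (f : (Fin d → ℕ) → ℝ) :
    multExp d N p (fun ξ => c * f ξ) = c * multExp d N p f := by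
  simp only [multExp, mul_sum]
  exact sum_congr rfl fun k _ => by ring

theorem multPMF_eq_choose_mul_multinomial {k : Fin d → ℕ} (h : ∑ i, k i ≤ N) :
    multPMF d N p k = N.choose (∑ i, k i) * Nat.multinomial univ k *
      (1 - ∑ i, p i) ^ (N - ∑ i, k i) * ∏ i, p i ^ k i := by
  have hcoef : N.factorial = N.choose (∑ i, k i) * Nat.multinomial univ k *
      ((N - ∑ i, k i).factorial * ∏ i, (k i).factorial) := by
    rw [← Nat.choose_mul_factorial_mul_factorial h, ← Nat.multinomial_spec]
    ring
  have hdiv : (N.factorial : ℝ) / ((N - ∑ i, k i).factorial * ∏ i, ((k i).factorial : ℝ)) =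
      N.choose (∑ i, k i) * Nat.multinomial univ k := by
    rw [div_eq_iff (by positivity)]
    exact_mod_cast hcoef
  rw [multPMF, if_pos h, hdiv]

theorem multExp_one : multExp d N p (fun _ => 1) = 1 := by
  have hdisj : (range (N + 1) : Set ℕ).PairwiseDisjoint (piAntidiag (univ : Finset (Fin d))) :=
    fun a _ b _ hab => disjoint_left.2 fun k ha hb =>
      hab ((mem_piAntidiag.1 ha).1.symm.trans (mem_piAntidiag.1 hb).1)
  rw [multExp_eq_sum_of_support _ ((range (N + 1)).biUnion (piAntidiag univ))
    fun k hk _ => mem_biUnion.2 ⟨_, mem_range.2 (Nat.lt_succ_of_le hk),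
      mem_piAntidiag.2 ⟨rfl, fun i _ => mem_univ i⟩⟩,
    sum_biUnion hdisj]
  calc ∑ n ∈ range (N + 1), ∑ k ∈ piAntidiag univ n, multPMF d N p k * 1
      = ∑ n ∈ range (N + 1), (∑ i, p i) ^ n * (1 - ∑ i, p i) ^ (N - n) * N.choose n := by
        refine sum_congr rfl fun n hn => ?_
        have hnN : n ≤ N := Nat.lt_succ_iff.1 (mem_range.1 hn)
        rw [sum_pow_eq_sum_piAntidiag]
        simp only [sum_mul]
        refine sum_congr rfl fun k hk => ?_
        obtain ⟨hkn, -⟩ := mem_piAntidiag.1 hk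
        rw [multPMF_eq_choose_mul_multinomial (hkn ▸ hnN), hkn]
        ring
    _ = 1 := by rw [← add_pow, add_sub_cancel, one_pow]


theorem multPMF_add_mul_prod_descFactorial (l j : Fin d → ℕ) (hj : ∑ i, j i ≤ N) :
    multPMF d N p (l + j) * ∏ i, ((l i + j i).descFactorial (j i) : ℝ) =
      N.descFactorial (∑ i, j i) * (∏ i, p i ^ j i) * multPMF d (N - ∑ i, j i) p l := by
  have hsum : ∑ i, (l + j) i = ∑ i, l i + ∑ i, j i := sum_add_distrib
  by_cases hl : ∑ i, l i ≤ N - ∑ i, j i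
  · have hN : ((N - ∑ i, j i).factorial : ℝ) * N.descFactorial (∑ i, j i) = N.factorial := by
      exact_mod_cast Nat.factorial_mul_descFactorial hj
    have hlj (i : Fin d) :
        ((l i).factorial : ℝ) * (l i + j i).descFactorial (j i) = (l i + j i).factorial := by
      rw [Nat.add_descFactorial_eq_ascFactorial]
      exact_mod_cast Nat.factorial_mul_ascFactorial (l i) (j i)
    have hprod : ∏ i, ((l i + j i).factorial : ℝ) =
        (∏ i, ((l i).factorial : ℝ)) * ∏ i, ((l i + j i).descFactorial (j i) : ℝ) := by
      rw [← prod_mul_distrib]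
      exact prod_congr rfl fun i _ => (hlj i).symm
    rw [multPMF, multPMF, if_pos (by omega), if_pos hl, hsum,
      show N - (∑ i, l i + ∑ i, j i) = N - ∑ i, j i - ∑ i, l i by omega, ← hN]
    have hdesc : ∏ i, ((l i + j i).descFactorial (j i) : ℝ) ≠ 0 :=
      prod_ne_zero_iff.2 fun i _ => Nat.cast_ne_zero.2 (Nat.descFactorial_pos.2 (by omega)).ne'
    simp only [Pi.add_apply, pow_add, prod_mul_distrib, hprod]
    field_simp
  · rw [multPMF_eq_zero_of_lt (by omega), multPMF_eq_zero_of_lt (not_le.1 hl), zero_mul, mul_zero]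

theorem multExp_prod_fallFac (j : Fin d → ℕ) :
    multExp d N p (fun ξ => ∏ i, fallFac (ξ i) (j i)) =
      fallFac N (∑ i, j i) * ∏ i, p i ^ j i := by
  simp only [fallFac_natCast]
  rcases lt_or_ge N (∑ i, j i) with hN | hN
  · rw [multExp_eq_sum_of_support _ ∅ fun k hk hf =>
      absurd ((sum_le_sum fun i _ => le_of_prod_descFactorial_ne_zero hf i).trans hk) hN.not_ge,
      sum_empty, Nat.descFactorial_of_lt hN, Nat.cast_zero, zero_mul]
  · have hs : ∀ k, ∑ i, k i ≤ N → ∏ i, ((k i).descFactorial (j i) : ℝ) ≠ 0 →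
        k ∈ (Fintype.piFinset fun _ => range (N - ∑ i, j i + 1)).map (addRightEmbedding j) := by
      intro k hk hf
      have hjk := le_of_prod_descFactorial_ne_zero hf
      have hsub : ∑ i, (k - j) i + ∑ i, j i = ∑ i, k i := by
        rw [← sum_add_distrib]
        exact sum_congr rfl fun i _ => tsub_add_cancel_of_le (hjk i)
      exact mem_map.2 ⟨k - j, mem_piFinset_range_of_sum_le (by omega), tsub_add_cancel_of_le hjk⟩
    rw [multExp_eq_sum_of_support _ _ hs, sum_map]
    calc ∑ l ∈ Fintype.piFinset fun _ => range (N - ∑ i, j i + 1),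
          multPMF d N p (l + j) * ∏ i, (((l + j) i).descFactorial (j i) : ℝ)
        = ∑ l ∈ Fintype.piFinset fun _ => range (N - ∑ i, j i + 1),
            (N.descFactorial (∑ i, j i) * ∏ i, p i ^ j i) *
              (multPMF d (N - ∑ i, j i) p l * 1) :=
          sum_congr rfl fun l _ => by
            rw [mul_one, ← multPMF_add_mul_prod_descFactorial l j hN]
            rfl
      _ = N.descFactorial (∑ i, j i) * ∏ i, p i ^ j i := by
          rw [← mul_sum, ← multExp, multExp_one, mul_one]

end Multinomial

theorem multinomial_central_moment_expansion_general (d N : ℕ) (p : Fin d → ℝ) (m : ℕ) :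
    multExp d N p (fun ξ => ∏ i, ((ξ i : ℝ) - N * p i) ^ (2 * m)) =
      ∑ k ∈ Fintype.piFinset fun _ : Fin d => Finset.range (2 * m + 1),
        ∑ j ∈ Fintype.piFinset fun i : Fin d => Finset.range (k i + 1),
          fallFac (N : ℝ) (∑ i, j i) *
            ∏ i, (((2 * m).choose (k i) : ℝ) * (stirling2 (k i) (j i) : ℝ) *
              (-(N : ℝ)) ^ (2 * m - k i) * p i ^ (2 * m - k i + j i)) := by
  simp_rw [prod_sub_pow_eq_sum_prod_fallFac, multExp_sum, multExp_const_mul, multExp_prod_fallFac]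
  refine sum_congr rfl fun k _ => sum_congr rfl fun j _ => ?_
  rw [mul_left_comm, ← prod_mul_distrib]
  congr 1
  exact prod_congr rfl fun i _ => by ring

/-- Expansion of the centered multinomial mixed moment `E[∏_i (ξ_i - Np_i)^{2m}]` in terms
of falling factorials and Stirling numbers of the second kind. -/
theorem multinomial_central_moment_expansion (d N : ℕ) (p : Fin d → ℝ)
    (hp0 : ∀ i, 0 ≤ p i) (hp1 : ∀ i, p i ≤ 1) (hps : ∑ i, p i ≤ 1) (m : ℕ) :
    multExp d N p (fun ξ => ∏ i, ((ξ i : ℝ) - N * p i) ^ (2 * m)) =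
      ∑ k ∈ Fintype.piFinset fun _ : Fin d => Finset.range (2 * m + 1),
        ∑ j ∈ Fintype.piFinset fun i : Fin d => Finset.range (k i + 1),
          fallFac (N : ℝ) (∑ i, j i) *
            ∏ i, (((2 * m).choose (k i) : ℝ) * (stirling2 (k i) (j i) : ℝ) *
              (-(N : ℝ)) ^ (2 * m - k i) * p i ^ (2 * m - k i + j i)) :=
  multinomial_central_moment_expansion_general d N p m
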